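/- On T*ℝ⁵, the potential V₂(q) = 2q₁q₄ - 2q₂q₃ + q₅² Poisson-commutes with each of M₁ = J₁₂ + J₃₄, M₂ = J₁₃ + J₂₄, M₃ = J₂₅ - J₃₅, M₄ = J₁₅ + J₄₅. -/

import Mathlib

noncomputable def pb {n : ℕ} (f g : (Fin n → ℝ) × (Fin n → ℝ) → ℝ)
    (x : (Fin n → ℝ) × (Fin n → ℝ)) : ℝ :=
  ∑ i : Fin n,
    (fderiv ℝ f x (Pi.single i 1, 0) * fderiv ℝ g x (0, Pi.single i 1)
      - fderiv ℝ f x (0, Pi.single i 1) * fderiv ℝ g x (Pi.single i 1, 0))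

noncomputable def J (i j : Fin 5) : (Fin 5 → ℝ) × (Fin 5 → ℝ) → ℝ :=
  fun x => x.1 i * x.2 j - x.1 j * x.2 i
noncomputable def M1 : (Fin 5 → ℝ) × (Fin 5 → ℝ) → ℝ := fun x => J 0 1 x + J 2 3 x
noncomputable def M2 : (Fin 5 → ℝ) × (Fin 5 → ℝ) → ℝ := fun x => J 0 2 x + J 1 3 x
noncomputable def M3 : (Fin 5 → ℝ) × (Fin 5 → ℝ) → ℝ := fun x => J 1 4 x - J 2 4 x
noncomputable def M4 : (Fin 5 → ℝ) × (Fin 5 → ℝ) → ℝ := fun x => J 0 4 x + J 3 4 x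

noncomputable def V2 : (Fin 5 → ℝ) × (Fin 5 → ℝ) → ℝ :=
  fun x => 2 * x.1 0 * x.1 3 - 2 * x.1 1 * x.1 2 + (x.1 4)^2

/-! Since `V₂` depends only on `q`, its bracket with `J_ij` is `q_i ∂_j V₂ - q_j ∂_i V₂`, the
derivative of `V₂` along the infinitesimal rotation in the `(q_i, q_j)`-plane. Each `M_k` is a
combination of such rotations lying in the orthogonal Lie algebra of the quadratic form `V₂`,
so the first-order variation of `V₂` along it cancels. -/

abbrev PhaseSpace (n : ℕ) := (Fin n → ℝ) × (Fin n → ℝ)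

section PoissonBracket

variable {n : ℕ} {f g h : PhaseSpace n → ℝ} {x : PhaseSpace n}

lemma pb_add_right (hg : DifferentiableAt ℝ g x) (hh : DifferentiableAt ℝ h x) :
    pb f (fun y => g y + h y) x = pb f g x + pb f h x := by
  rw [pb, pb, pb, ← Finset.sum_add_distrib, fderiv_fun_add hg hh]
  refine Finset.sum_congr rfl fun i _ => ?_
  simp only [add_apply]
  ring

lemma pb_sub_right (hg : DifferentiableAt ℝ g x) (hh : DifferentiableAt ℝ h x) :
    pb f (fun y => g y - h y) x = pb f g x - pb f h x := by
  rw [pb, pb, pb, ← Finset.sum_sub_distrib, fderiv_fun_sub hg hh]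
  refine Finset.sum_congr rfl fun i _ => ?_
  simp only [sub_apply]
  ring

lemma fderiv_comp_fst_apply {φ : (Fin n → ℝ) → ℝ} (hφ : DifferentiableAt ℝ φ x.1)
    (v : PhaseSpace n) :
    fderiv ℝ (φ ∘ Prod.fst) x v = fderiv ℝ φ x.1 v.1 := by
  rw [fderiv_comp x hφ differentiableAt_fst, fderiv_fst]
  rfl

lemma pb_comp_fst {φ : (Fin n → ℝ) → ℝ} (hφ : DifferentiableAt ℝ φ x.1) :
    pb (φ ∘ Prod.fst) g x =
      ∑ i : Fin n, fderiv ℝ φ x.1 (Pi.single i 1) * fderiv ℝ g x (0, Pi.single i 1) := by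
  simp [pb, fderiv_comp_fst_apply hφ]

end PoissonBracket

lemma differentiable_J (i j : Fin 5) : Differentiable ℝ (J i j) := by
  unfold J
  fun_prop

lemma fderiv_J_apply (i j : Fin 5) (x v : PhaseSpace 5) :
    fderiv ℝ (J i j) x v = x.1 i * v.2 j + v.1 i * x.2 j - (x.1 j * v.2 i + v.1 j * x.2 i) := by
  have hq (k : Fin 5) := (hasFDerivAt_apply (𝕜 := ℝ) k x.1).comp x hasFDerivAt_fst
  have hp (k : Fin 5) := (hasFDerivAt_apply (𝕜 := ℝ) k x.2).comp x hasFDerivAt_snd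
  have hJ : HasFDerivAt (J i j) _ x := ((hq i).mul (hp j)).sub ((hq j).mul (hp i))
  rw [hJ.fderiv]
  simp only [Function.comp_apply, sub_apply, add_apply, smul_apply, smul_eq_mul,
    ContinuousLinearMap.comp_apply, ContinuousLinearMap.coe_fst', ContinuousLinearMap.coe_snd',
    ContinuousLinearMap.proj_apply]
  ring

lemma pb_comp_fst_J {φ : (Fin 5 → ℝ) → ℝ} {x : PhaseSpace 5}
    (hφ : DifferentiableAt ℝ φ x.1) (i j : Fin 5) :
    pb (φ ∘ Prod.fst) (J i j) x =
      x.1 i * fderiv ℝ φ x.1 (Pi.single j 1) - x.1 j * fderiv ℝ φ x.1 (Pi.single i 1) := by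
  simp only [pb_comp_fst hφ, fderiv_J_apply, Pi.zero_apply, Pi.single_apply, mul_ite, mul_one,
    mul_zero, zero_mul, add_zero, mul_sub, Finset.sum_sub_distrib, Finset.sum_ite_eq,
    Finset.mem_univ, if_true]
  ring

def V2q : (Fin 5 → ℝ) → ℝ := fun q => 2 * q 0 * q 3 - 2 * q 1 * q 2 + (q 4) ^ 2

lemma V2_eq_comp_fst : V2 = V2q ∘ Prod.fst := rfl

lemma differentiable_V2q : Differentiable ℝ V2q := by
  unfold V2q
  fun_prop

lemma fderiv_V2q_apply (q v : Fin 5 → ℝ) :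
    fderiv ℝ V2q q v = 2 * (q 3 * v 0 + q 0 * v 3 - q 2 * v 1 - q 1 * v 2 + q 4 * v 4) := by
  have hq (k : Fin 5) := hasFDerivAt_apply (𝕜 := ℝ) k q
  have h : HasFDerivAt V2q _ q :=
    ((((hq 0).const_mul (2 : ℝ)).mul (hq 3)).sub (((hq 1).const_mul (2 : ℝ)).mul (hq 2))).add
      ((hq 4).pow 2)
  rw [h.fderiv]
  simp only [add_apply, sub_apply, smul_apply, smul_eq_mul, ContinuousLinearMap.proj_apply,
    Nat.add_one_sub_one, pow_one, nsmul_eq_mul, Nat.cast_ofNat]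
  ring

theorem V2_invariant_E5 :
    (∀ x, pb V2 M1 x = 0) ∧ (∀ x, pb V2 M2 x = 0) ∧
    (∀ x, pb V2 M3 x = 0) ∧ (∀ x, pb V2 M4 x = 0) := by
  have hV (x : PhaseSpace 5) := differentiable_V2q x.1
  have hJ (i j : Fin 5) (x : PhaseSpace 5) := differentiable_J i j x
  refine ⟨fun x => ?_, fun x => ?_, fun x => ?_, fun x => ?_⟩
  on_goal 1 => unfold M1; rw [pb_add_right (hJ 0 1 x) (hJ 2 3 x)]
  on_goal 2 => unfold M2; rw [pb_add_right (hJ 0 2 x) (hJ 1 3 x)]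
  on_goal 3 => unfold M3; rw [pb_sub_right (hJ 1 4 x) (hJ 2 4 x)]
  on_goal 4 => unfold M4; rw [pb_add_right (hJ 0 4 x) (hJ 3 4 x)]
  all_goals
    rw [V2_eq_comp_fst, pb_comp_fst_J (hV x), pb_comp_fst_J (hV x)]
    simp only [fderiv_V2q_apply, Pi.single_eq_same, Pi.single_eq_of_ne, ne_eq, Fin.reduceEq,
      not_false_eq_true]
    ring
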